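/- arXiv:hep-th/0405089 — 2 statements merged into one kernel-verified Lean document; each statement's English description precedes it below -/
import Mathlib

section
/- Let f : ℂⁿ → ℂ be symmetric in its arguments, vanish whenever two arguments coincide, and be analytic on and inside a simple closed contour C traversed n-fold. Let 𝔞 be meromorphic with 1+𝔞 having only simple zeros λ_1,…,λ_M inside C, and 1/(1+𝔞) having no other poles inside C. Then (1/n!)∫_{Cⁿ} ∏_j dω_j/(2πi(1+𝔞(ω_j))) f(ω_1,…,ω_n) = ∑_{subsets {λ⁺}⊂{λ}, |λ⁺|=n} f(λ_1⁺,…,λ_n⁺)/∏_{j=1}^n 𝔞'(λ_j⁺). -/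
/-!
The kernel `1/(2πi(1 + 𝔞))` has simple poles at the `λ_j` with residues `1/𝔞'(λ_j)` and no
others inside the circle, so by the residue theorem a single contour integration against it
evaluates an analytic function `g` as `∑_j g(λ_j)/𝔞'(λ_j)`. Integrating out the variables one at
a time turns the `n`-fold integral into a sum over all maps `Fin n → Fin M`; the terms of
non-injective maps vanish because `f` vanishes when two arguments coincide, leaving the sum over
embeddings.
-/

open Complex Metric

/-- The `n`-fold iterated contour integral over the circle `C(c,R)`. -/
noncomputable def iterCircleInt (c : ℂ) (R : ℝ) : (n : ℕ) → ((Fin n → ℂ) → ℂ) → ℂ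
  | 0, f => f ![]
  | n + 1, f => ∮ z in C(c, R), iterCircleInt c R n (fun v => f (Fin.cons z v))

open Set Filter Real
open scoped Topology

theorem circleIntegral_eq_zero_of_removable {c : ℂ} {R : ℝ} (hR : 0 ≤ R) {F : ℂ → ℂ}
    {s : Finset ℂ} (hs : (s : Set ℂ) ⊆ ball c R) (hc : ContinuousOn F (closedBall c R \ s))
    (hd : ∀ z ∈ ball c R \ s, DifferentiableAt ℂ F z)
    (hlim : ∀ w ∈ s, ∃ L, Tendsto F (𝓝[≠] w) (𝓝 L)) :
    ∮ z in C(c, R), F z = 0 := by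
  classical
  set G : ℂ → ℂ := fun z => if z ∈ s then limUnder (𝓝[≠] z) F else F z
  have hs_closed : IsClosed (s : Set ℂ) := s.finite_toSet.isClosed
  have hGF : ∀ z ∉ s, G =ᶠ[𝓝 z] F := fun z hz => by
    filter_upwards [hs_closed.compl_mem_nhds hz] with y hy
    exact if_neg hy
  have hGc : ContinuousOn G (closedBall c R) := by
    intro z hz
    by_cases hzs : z ∈ s
    · obtain ⟨L, hL⟩ := hlim z hzs
      refine (continuousAt_iff_punctured_nhds.2 ?_).continuousWithinAt
      have hGz : G z = L := (if_pos hzs).trans hL.limUnder_eq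
      have hnear : (↑s \ {z} : Set ℂ)ᶜ ∈ 𝓝 z :=
        s.finite_toSet.sdiff.isClosed.compl_mem_nhds (by simp)
      rw [hGz]
      refine hL.congr' ?_
      filter_upwards [nhdsWithin_le_nhds hnear, self_mem_nhdsWithin] with y hy hyz
      exact (if_neg fun hys => hy ⟨hys, hyz⟩).symm
    · rw [ContinuousWithinAt, nhdsWithin_restrict' _ (hs_closed.compl_mem_nhds hzs)]
      exact (hc z ⟨hz, hzs⟩).congr (fun y hy => if_neg hy.2) (if_neg hzs)
  have hGd : ∀ z ∈ ball c R \ s, DifferentiableAt ℂ G z := fun z hz =>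
    (hd z hz).congr_of_eventuallyEq (hGF z hz.2)
  have hFG : EqOn F G (sphere c R) := fun z hz =>
    (if_neg fun hzs => (hs hzs).ne (mem_sphere.1 hz)).symm
  rw [circleIntegral.integral_congr hR hFG]
  exact circleIntegral_eq_zero_of_differentiable_on_off_countable hR s.countable_toSet hGc hGd

theorem circleIntegral_eq_sum_residues {c : ℂ} {R : ℝ} (hR : 0 ≤ R) {F : ℂ → ℂ}
    {s : Finset ℂ} (hs : (s : Set ℂ) ⊆ ball c R) (r : ℂ → ℂ)
    (hc : ContinuousOn F (closedBall c R \ s))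
    (hd : ∀ z ∈ ball c R \ s, DifferentiableAt ℂ F z)
    (hres : ∀ w ∈ s, ∃ L, Tendsto (fun z => F z - r w * (z - w)⁻¹) (𝓝[≠] w) (𝓝 L)) :
    ∮ z in C(c, R), F z = 2 * π * I * ∑ w ∈ s, r w := by
  set P : ℂ → ℂ := fun z => ∑ w ∈ s, r w * (z - w)⁻¹
  have hPc : ContinuousOn P (closedBall c R \ s) :=
    continuousOn_finsetSum _ fun w hw => continuousOn_const.mul <|
      (continuousOn_id.sub continuousOn_const).inv₀ fun z hz =>
        sub_ne_zero.2 (hw.ne_of_notMem hz.2).symm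
  have hPd : ∀ z ∈ ball c R \ s, DifferentiableAt ℂ P z := fun z hz =>
    DifferentiableAt.fun_sum fun w hw => (differentiableAt_const _).mul <|
      (differentiableAt_id.sub (differentiableAt_const _)).inv
        (sub_ne_zero.2 (hw.ne_of_notMem hz.2).symm)
  have hPlim : ∀ w ∈ s, ∃ L, Tendsto (fun z => F z - P z) (𝓝[≠] w) (𝓝 L) := by
    intro w hw
    obtain ⟨L, hL⟩ := hres w hw
    have hrest : Tendsto (fun z => ∑ v ∈ s.erase w, r v * (z - v)⁻¹) (𝓝 w)
        (𝓝 (∑ v ∈ s.erase w, r v * (w - v)⁻¹)) :=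
      tendsto_finsetSum _ fun v hv => tendsto_const_nhds.mul <|
        ((continuous_id.sub continuous_const).tendsto w).inv₀
          (sub_ne_zero.2 (Finset.ne_of_mem_erase hv).symm)
    refine ⟨_, (hL.sub (hrest.mono_left nhdsWithin_le_nhds)).congr fun z => ?_⟩
    simp only [P, ← Finset.add_sum_erase s _ hw]
    ring
  have hsphere : sphere c R ⊆ closedBall c R \ s := fun z hz =>
    ⟨sphere_subset_closedBall hz, fun hzs => (hs hzs).ne (mem_sphere.1 hz)⟩
  have hint : ∀ w ∈ s, CircleIntegrable (fun z => r w * (z - w)⁻¹) c R := fun w hw =>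
    (circleIntegrable_sub_inv_iff.2 <| Or.inr <| by
      rw [abs_of_nonneg hR]; exact fun h => (hs hw).ne (mem_sphere.1 h)).const_mul _
  calc ∮ z in C(c, R), F z = ∮ z in C(c, R), ((F z - P z) + P z) := by simp
    _ = (∮ z in C(c, R), (F z - P z)) + ∮ z in C(c, R), P z :=
      circleIntegral.integral_add ((hc.sub hPc).mono hsphere |>.circleIntegrable hR)
        (hPc.mono hsphere |>.circleIntegrable hR)
    _ = 0 + ∑ w ∈ s, r w * (2 * π * I) := by
      rw [circleIntegral_eq_zero_of_removable (F := fun z => F z - P z) hR hs (hc.sub hPc)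
        (fun z hz => (hd z hz).sub (hPd z hz)) hPlim, circleIntegral.integral_fun_sum hint]
      congr 1
      refine Finset.sum_congr rfl fun w hw => ?_
      rw [circleIntegral.integral_const_mul, circleIntegral.integral_sub_inv_of_mem_ball (hs hw)]
    _ = 2 * π * I * ∑ w ∈ s, r w := by rw [zero_add, ← Finset.sum_mul, mul_comm]

theorem AnalyticAt.exists_tendsto_inv_mul_sub_residue {h g : ℂ → ℂ} {a : ℂ}
    (hh : AnalyticAt ℂ h a) (ha : h a = 0) (h'a : deriv h a ≠ 0) (hg : DifferentiableAt ℂ g a) :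
    ∃ L, Tendsto (fun z => (h z)⁻¹ * g z - g a / deriv h a * (z - a)⁻¹) (𝓝[≠] a) (𝓝 L) := by
  -- as `h z = (z - a) * dslope h a z`, the function is the slope of `g / dslope h a` at `a`
  obtain ⟨U, hU, hUh⟩ := hh.eventually_analyticAt.exists_mem
  have hφ : DifferentiableAt ℂ (dslope h a) a :=
    ((Complex.differentiableOn_dslope hU).2 fun z hz => (hUh z hz).differentiableWithinAt)
      |>.differentiableAt hU
  have hφa : dslope h a a = deriv h a := dslope_same h a
  set ψ : ℂ → ℂ := fun z => g z / dslope h a z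
  have hψ : DifferentiableAt ℂ ψ a := hg.div hφ (hφa ▸ h'a)
  refine ⟨deriv ψ a, (hasDerivAt_iff_tendsto_slope.1 hψ.hasDerivAt).congr' ?_⟩
  filter_upwards [self_mem_nhdsWithin] with z hz
  have hza : z - a ≠ 0 := sub_ne_zero.2 hz
  simp only [slope_def_field, ψ, hφa, dslope_of_ne h hz, ha, sub_zero]
  rcases eq_or_ne (h z) 0 with hz0 | hz0
  · simp [hz0, div_eq_mul_inv]
  · field_simp

theorem circleIntegral_inv_one_add_mul_eq_sum {c : ℂ} {R : ℝ} (hR : 0 ≤ R) {𝔞 : ℂ → ℂ}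
    (h𝔞 : AnalyticOnNhd ℂ 𝔞 (closedBall c R)) {M : ℕ} {lam : Fin M → ℂ}
    (hinj : Function.Injective lam) (hin : ∀ j, lam j ∈ ball c R)
    (hzero : ∀ j, 1 + 𝔞 (lam j) = 0) (hsimple : ∀ j, deriv 𝔞 (lam j) ≠ 0)
    (honly : ∀ z ∈ closedBall c R, 1 + 𝔞 z = 0 → ∃ j, z = lam j)
    {g : ℂ → ℂ} (hg : AnalyticOnNhd ℂ g (closedBall c R)) :
    ∮ z in C(c, R), (2 * π * I * (1 + 𝔞 z))⁻¹ * g z = ∑ j, (deriv 𝔞 (lam j))⁻¹ * g (lam j) := by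
  set s : Finset ℂ := Finset.univ.image lam
  have hs : (s : Set ℂ) ⊆ ball c R := by
    simpa [s, Set.range_subset_iff] using hin
  have hne : ∀ z ∈ closedBall c R \ s, 1 + 𝔞 z ≠ 0 := fun z hz h0 => by
    obtain ⟨j, rfl⟩ := honly z hz.1 h0
    exact hz.2 (by simp [s])
  have hres : ∀ w ∈ s, ∃ L, Tendsto (fun z => (1 + 𝔞 z)⁻¹ * g z - g w / deriv 𝔞 w * (z - w)⁻¹)
      (𝓝[≠] w) (𝓝 L) := by
    simp only [s, Finset.mem_image, Finset.mem_univ, true_and, forall_exists_index,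
      forall_apply_eq_imp_iff]
    intro j
    have hmem : lam j ∈ closedBall c R := ball_subset_closedBall (hin j)
    have := AnalyticAt.exists_tendsto_inv_mul_sub_residue (h := fun z => 1 + 𝔞 z)
      (analyticAt_const.add (h𝔞 _ hmem)) (hzero j) (by rw [deriv_const_add]; exact hsimple j)
      (hg _ hmem).differentiableAt
    simpa only [deriv_const_add] using this
  have hsum := circleIntegral_eq_sum_residues (F := fun z => (1 + 𝔞 z)⁻¹ * g z) hR hs
    (fun w => g w / deriv 𝔞 w)
    ((continuousOn_const.add (h𝔞.continuousOn.mono sdiff_subset)).inv₀ hne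
      |>.mul (hg.continuousOn.mono sdiff_subset))
    (fun z hz => have hz' := ⟨ball_subset_closedBall hz.1, hz.2⟩
      (((differentiableAt_const _).add (h𝔞 z hz'.1).differentiableAt).inv (hne z hz')).mul
        (hg z hz'.1).differentiableAt)
    hres
  have h2πI : (2 * π * I : ℂ) ≠ 0 := by simp [pi_ne_zero, I_ne_zero]
  calc ∮ z in C(c, R), (2 * π * I * (1 + 𝔞 z))⁻¹ * g z
      = (2 * π * I)⁻¹ * ∮ z in C(c, R), (1 + 𝔞 z)⁻¹ * g z := by
        rw [← circleIntegral.integral_const_mul]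
        simp only [mul_inv, mul_assoc]
    _ = ∑ w ∈ s, g w / deriv 𝔞 w := by rw [hsum, inv_mul_cancel_left₀ h2πI]
    _ = ∑ j, (deriv 𝔞 (lam j))⁻¹ * g (lam j) := by
        rw [Finset.sum_image fun i _ j _ hij => hinj hij]
        simp only [div_eq_inv_mul]

theorem iterCircleInt_const_mul (c : ℂ) (R : ℝ) (n : ℕ) (a : ℂ) (F : (Fin n → ℂ) → ℂ) :
    iterCircleInt c R n (fun v => a * F v) = a * iterCircleInt c R n F := by
  induction n with
  | zero => rfl
  | succ n ih => simp only [iterCircleInt, ih, circleIntegral.integral_const_mul]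

theorem iterCircleInt_prod_mul_eq_sum {c : ℂ} {R : ℝ} {K : ℂ → ℂ} {M : ℕ} (lam w : Fin M → ℂ)
    (hK : ∀ g : ℂ → ℂ, AnalyticOnNhd ℂ g (closedBall c R) →
      ∮ z in C(c, R), K z * g z = ∑ k, w k * g (lam k))
    (n : ℕ) (f : (Fin n → ℂ) → ℂ)
    (hf : ∀ (i : Fin n) (v : Fin n → ℂ),
      AnalyticOnNhd ℂ (fun z => f (Function.update v i z)) (closedBall c R)) :
    iterCircleInt c R n (fun v => (∏ j, K (v j)) * f v) =
      ∑ g : Fin n → Fin M, (∏ j, w (g j)) * f (lam ∘ g) := by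
  induction n with
  | zero => simp [iterCircleInt, Subsingleton.elim _ (![] : Fin 0 → ℂ)]
  | succ n ih =>
    have hf_tail : ∀ z i v, AnalyticOnNhd ℂ
        (fun y => f (Fin.cons z (Function.update v i y))) (closedBall c R) := fun z i v => by
      simpa only [Fin.cons_update] using hf i.succ (Fin.cons z v)
    have hf_head : ∀ v, AnalyticOnNhd ℂ (fun z => f (Fin.cons z v)) (closedBall c R) := fun v => by
      simpa only [Fin.update_cons_zero] using hf 0 (Fin.cons 0 v)
    calc iterCircleInt c R (n + 1) (fun v => (∏ j, K (v j)) * f v)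
        = ∮ z in C(c, R), K z *
            ∑ g : Fin n → Fin M, (∏ j, w (g j)) * f (Fin.cons z (lam ∘ g)) := by
          simp only [iterCircleInt, Fin.prod_univ_succ, Fin.cons_zero, Fin.cons_succ, mul_assoc,
            iterCircleInt_const_mul]
          congr 1; ext z
          rw [ih (fun v => f (Fin.cons z v)) (hf_tail z)]
      _ = ∑ k, w k * ∑ g : Fin n → Fin M, (∏ j, w (g j)) * f (Fin.cons (lam k) (lam ∘ g)) :=
          hK _ (Finset.analyticOnNhd_fun_sum _ fun g _ => analyticOnNhd_const.mul (hf_head _))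
      _ = ∑ g : Fin (n + 1) → Fin M, (∏ j, w (g j)) * f (lam ∘ g) := by
          rw [← (Fin.consEquiv fun _ => Fin M).sum_comp, Fintype.sum_prod_type]
          simp only [Finset.mul_sum, Fin.consEquiv, Equiv.coe_fn_mk, Fin.prod_univ_succ,
            Fin.cons_zero, Fin.cons_succ, Fin.comp_cons, mul_assoc]

theorem Fintype.sum_embedding_eq_sum_of_not_injective {α β M : Type*} [Fintype α] [Fintype β]
    [DecidableEq α] [DecidableEq β] [AddCommMonoid M] (φ : (α → β) → M)
    (hφ : ∀ g, ¬ Function.Injective g → φ g = 0) :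
    ∑ g : α ↪ β, φ g = ∑ g, φ g := by
  calc ∑ g : α ↪ β, φ g
      = ∑ g ∈ Finset.univ.map ⟨fun g : α ↪ β => ⇑g, DFunLike.coe_injective⟩, φ g := by
        rw [Finset.sum_map]; rfl
    _ = ∑ g, φ g := Finset.sum_subset (Finset.subset_univ _) fun g _ hg =>
      hφ g fun hinj => hg (Finset.mem_map.2 ⟨⟨g, hinj⟩, Finset.mem_univ _, rfl⟩)

theorem stmt_10_general (n M : ℕ) (c : ℂ) (R : ℝ) (hR : 0 < R)
    (f : (Fin n → ℂ) → ℂ)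
    (hvan : ∀ (v : Fin n → ℂ) (i j : Fin n), i ≠ j → v i = v j → f v = 0)
    (hanal : ∀ (i : Fin n) (v : Fin n → ℂ),
      AnalyticOnNhd ℂ (fun z => f (Function.update v i z)) (closedBall c R))
    (𝔞 : ℂ → ℂ) (h𝔞 : AnalyticOnNhd ℂ 𝔞 (closedBall c R))
    (lam : Fin M → ℂ) (hinj : Function.Injective lam)
    (hin : ∀ j, lam j ∈ ball c R)
    (hzero : ∀ j, 1 + 𝔞 (lam j) = 0)
    (hsimple : ∀ j, deriv 𝔞 (lam j) ≠ 0)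
    (honly : ∀ z ∈ closedBall c R, 1 + 𝔞 z = 0 → ∃ j, z = lam j) :
    (n.factorial : ℂ)⁻¹ *
        iterCircleInt c R n
          (fun v => (∏ j, (2 * Real.pi * I * (1 + 𝔞 (v j)))⁻¹) * f v) =
      (n.factorial : ℂ)⁻¹ *
        ∑ g : Fin n ↪ Fin M, f (lam ∘ g) / ∏ j, deriv 𝔞 (lam (g j)) := by
  congr 1
  rw [iterCircleInt_prod_mul_eq_sum (K := fun z => (2 * π * I * (1 + 𝔞 z))⁻¹) lam
    (fun k => (deriv 𝔞 (lam k))⁻¹)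
    (fun g hg => circleIntegral_inv_one_add_mul_eq_sum hR.le h𝔞 hinj hin hzero hsimple honly hg)
    n f hanal, Fintype.sum_embedding_eq_sum_of_not_injective
      (fun g => f (lam ∘ g) / ∏ j, deriv 𝔞 (lam (g j)))]
  · simp only [Finset.prod_inv_distrib, div_eq_inv_mul]
  · intro g hg
    obtain ⟨i, j, hij, hne⟩ := Function.not_injective_iff.1 hg
    rw [hvan (lam ∘ g) i j hne (congrArg lam hij), zero_div]

/-- Residue formula turning an `n`-fold contour integral of a symmetric function,
vanishing on coinciding arguments, against `∏ 1/(2πi(1+𝔞(ω_j)))` into a sum over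
`n`-element subsets of the simple zeros `λ_1,…,λ_M` of `1+𝔞` inside the contour
(written as a sum over embeddings, each subset counted `n!` times). -/
theorem stmt_10 (n M : ℕ) (c : ℂ) (R : ℝ) (hR : 0 < R)
    (f : (Fin n → ℂ) → ℂ)
    (hsym : ∀ (σ : Equiv.Perm (Fin n)) (v : Fin n → ℂ), f (v ∘ σ) = f v)
    (hvan : ∀ (v : Fin n → ℂ) (i j : Fin n), i ≠ j → v i = v j → f v = 0)
    (hanal : ∀ (i : Fin n) (v : Fin n → ℂ),
      AnalyticOnNhd ℂ (fun z => f (Function.update v i z)) (closedBall c R))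
    (𝔞 : ℂ → ℂ) (h𝔞 : AnalyticOnNhd ℂ 𝔞 (closedBall c R))
    (lam : Fin M → ℂ) (hinj : Function.Injective lam)
    (hin : ∀ j, lam j ∈ ball c R)
    (hzero : ∀ j, 1 + 𝔞 (lam j) = 0)
    (hsimple : ∀ j, deriv 𝔞 (lam j) ≠ 0)
    (honly : ∀ z ∈ closedBall c R, 1 + 𝔞 z = 0 → ∃ j, z = lam j) :
    (n.factorial : ℂ)⁻¹ *
        iterCircleInt c R n
          (fun v => (∏ j, (2 * Real.pi * I * (1 + 𝔞 (v j)))⁻¹) * f v) =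
      (n.factorial : ℂ)⁻¹ *
        ∑ g : Fin n ↪ Fin M, f (lam ∘ g) / ∏ j, deriv 𝔞 (lam (g j)) :=
  stmt_10_general n M c R hR f hvan hanal 𝔞 h𝔞 lam hinj hin hzero hsimple honly
end

section
/- Under the XXZ Bethe ansatz condition, the limit μ_k → λ_k of the Slavnov matrix entry N̂(λ_j,μ_k) = t(λ_j,μ_k) − t(μ_k,λ_j)𝔞(μ_k) equals δ_{jk} 𝔞'(λ_k)/𝔞(λ_k) + sinh(2η)/(sinh(λ_j−λ_k+η)sinh(λ_j−λ_k−η)). -/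
/-!
On the diagonal, both kernels have a simple pole at `μ = λ`, and the Bethe equation
`𝔞(λ) = −1` makes the residues cancel. Clearing the denominators writes the entry as `F / G`
with `F(λ) = G(λ) = 0` and `G'(λ) = sinh² η`, so the limit is `F'(λ) / G'(λ)`. Off the
diagonal the entry is continuous at `λ_k`, and its value there is the addition formula
`t(a, b) + t(b, a) = sinh 2η / (sinh(a − b + η) sinh(a − b − η))`.
-/

open Complex Filter Topology

/-- `t(λ,ξ) = sinh(η)/(sinh(λ−ξ)sinh(λ−ξ+η))`. -/
noncomputable def tker (η lam ξ : ℂ) : ℂ :=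
  sinh η / (sinh (lam - ξ) * sinh (lam - ξ + η))

noncomputable def slavnovEntry (η : ℂ) (𝔞 : ℂ → ℂ) (lam μ : ℂ) : ℂ :=
  tker η lam μ - tker η μ lam * 𝔞 μ

theorem tendsto_div_nhdsNE_of_hasDerivAt {𝕜 : Type*} [NontriviallyNormedField 𝕜]
    {f g : 𝕜 → 𝕜} {f' g' c : 𝕜} (hf : HasDerivAt f f' c) (hg : HasDerivAt g g' c)
    (hfc : f c = 0) (hgc : g c = 0) (hg' : g' ≠ 0) :
    Tendsto (fun x => f x / g x) (𝓝[≠] c) (𝓝 (f' / g')) := by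
  refine ((hasDerivAt_iff_tendsto_slope.mp hf).div (hasDerivAt_iff_tendsto_slope.mp hg)
    hg').congr' ?_
  filter_upwards [self_mem_nhdsWithin] with x hx
  rw [Pi.div_apply, slope_def_field, slope_def_field, hfc, hgc, sub_zero, sub_zero,
    div_div_div_cancel_right₀ (sub_ne_zero.mpr hx)]

theorem tker_add_tker {η a b : ℂ} (h : sinh (a - b) ≠ 0) (hp : sinh (a - b + η) ≠ 0)
    (hm : sinh (a - b - η) ≠ 0) :
    tker η a b + tker η b a = sinh (2 * η) / (sinh (a - b + η) * sinh (a - b - η)) := by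
  rw [tker, tker, show b - a = -(a - b) by ring, show -(a - b) + η = -(a - b - η) by ring,
    sinh_neg, sinh_neg, sinh_two_mul]
  field_simp
  rw [sinh_add, sinh_sub]
  ring

theorem ContinuousAt.tker {η : ℂ} {f g : ℂ → ℂ} {x : ℂ} (hf : ContinuousAt f x)
    (hg : ContinuousAt g x) (h : sinh (f x - g x) ≠ 0) (h' : sinh (f x - g x + η) ≠ 0) :
    ContinuousAt (fun z => tker η (f z) (g z)) x :=
  continuousAt_const.div (by fun_prop) (mul_ne_zero h h')

theorem tendsto_slavnovEntry_nhdsNE_self {η c a' : ℂ} {𝔞 : ℂ → ℂ} (hη : sinh η ≠ 0)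
    (ha : HasDerivAt 𝔞 a' c) (hBethe : 𝔞 c = -1) :
    Tendsto (slavnovEntry η 𝔞 c) (𝓝[≠] c) (𝓝 (-a' - sinh (2 * η) / sinh η ^ 2)) := by
  have hε : HasDerivAt (fun μ => μ - c) 1 c := (hasDerivAt_id c).sub_const c
  have hF : HasDerivAt (fun μ => -sinh η * (sinh (η + (μ - c)) + 𝔞 μ * sinh (η - (μ - c))))
      (-sinh η * (2 * cosh η + a' * sinh η)) c := by
    refine (((hε.const_add η).csinh.add (ha.mul (hε.const_sub η).csinh)).const_mul
      (-sinh η)).congr_deriv ?_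
    simp only [sub_self, add_zero, sub_zero, hBethe]
    ring
  have hG : HasDerivAt (fun μ => sinh (μ - c) * (sinh (η - (μ - c)) * sinh (η + (μ - c))))
      (sinh η ^ 2) c := by
    refine (hε.csinh.mul ((hε.const_sub η).csinh.mul (hε.const_add η).csinh)).congr_deriv ?_
    simp only [Pi.mul_apply, sub_self, add_zero, sub_zero, cosh_zero, sinh_zero]
    ring
  have hG0 : sinh η ^ 2 ≠ 0 := pow_ne_zero 2 hη
  have hlim : -sinh η * (2 * cosh η + a' * sinh η) / sinh η ^ 2
      = -a' - sinh (2 * η) / sinh η ^ 2 := by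
    rw [sinh_two_mul]
    field_simp
    ring
  rw [← hlim]
  refine (tendsto_div_nhdsNE_of_hasDerivAt hF hG (by simp [hBethe]) (by simp) hG0).congr' ?_
  filter_upwards [hG.eventually_ne hG0 (c := 0)] with μ hG0
  obtain ⟨hε0, hm, hp⟩ : sinh (μ - c) ≠ 0 ∧ sinh (η - (μ - c)) ≠ 0 ∧ sinh (η + (μ - c)) ≠ 0 := by
    simpa only [ne_eq, mul_eq_zero, not_or] using hG0
  rw [slavnovEntry, tker, tker, show c - μ = -(μ - c) by ring,
    show -(μ - c) + η = η - (μ - c) by ring, sinh_neg, add_comm (μ - c)]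
  field_simp
  ring

theorem tendsto_slavnovEntry_nhdsNE {η a b : ℂ} {𝔞 : ℂ → ℂ} (h : sinh (a - b) ≠ 0)
    (hp : sinh (a - b + η) ≠ 0) (hm : sinh (a - b - η) ≠ 0) (ha : ContinuousAt 𝔞 b)
    (hBethe : 𝔞 b = -1) :
    Tendsto (slavnovEntry η 𝔞 a) (𝓝[≠] b)
      (𝓝 (sinh (2 * η) / (sinh (a - b + η) * sinh (a - b - η)))) := by
  have h' : sinh (b - a) ≠ 0 := by rwa [← neg_sub, sinh_neg, neg_ne_zero]
  have hp' : sinh (b - a + η) ≠ 0 := by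
    rwa [show b - a + η = -(a - b - η) by ring, sinh_neg, neg_ne_zero]
  have hcont : ContinuousAt (slavnovEntry η 𝔞 a) b :=
    (continuousAt_const.tker continuousAt_id h hp).sub
      ((continuousAt_id.tker continuousAt_const h' hp').mul ha)
  rw [← tker_add_tker h hp hm]
  convert hcont.tendsto.mono_left nhdsWithin_le_nhds using 2
  rw [slavnovEntry, hBethe, mul_neg_one, sub_neg_eq_add]

/-- Under the Bethe ansatz condition `𝔞(λ_k) = −1`, the limit `μ → λ_k` of the
Slavnov matrix entry `N̂(λ_j,μ) = t(λ_j,μ) − t(μ,λ_j)𝔞(μ)` equals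
`δ_{jk} 𝔞'(λ_k)/𝔞(λ_k) + sinh(2η)/(sinh(λ_j−λ_k+η)sinh(λ_j−λ_k−η))`. -/
theorem stmt_18 (M : ℕ) (η : ℂ) (lam : Fin M → ℂ) (𝔞 : ℂ → ℂ) (j k : Fin M)
    (hη : sinh η ≠ 0) (ha : AnalyticAt ℂ 𝔞 (lam k)) (hBethe : 𝔞 (lam k) = -1)
    (hjk : j ≠ k → sinh (lam j - lam k) ≠ 0 ∧ sinh (lam j - lam k + η) ≠ 0 ∧
      sinh (lam j - lam k - η) ≠ 0) :
    Tendsto (fun mu : ℂ => tker η (lam j) mu - tker η mu (lam j) * 𝔞 mu)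
      (𝓝[≠] lam k)
      (𝓝 ((if j = k then 1 else 0) * (deriv 𝔞 (lam k) / 𝔞 (lam k)) +
        sinh (2 * η) / (sinh (lam j - lam k + η) * sinh (lam j - lam k - η)))) := by
  change Tendsto (slavnovEntry η 𝔞 (lam j)) _ _
  by_cases hjk' : j = k
  · subst hjk'
    convert tendsto_slavnovEntry_nhdsNE_self hη ha.differentiableAt.hasDerivAt hBethe using 2
    simp only [if_pos, hBethe, sub_self, zero_add, zero_sub, sinh_neg]
    field_simp
    ring
  · obtain ⟨h, hp, hm⟩ := hjk hjk'
    simpa [hjk'] using tendsto_slavnovEntry_nhdsNE h hp hm ha.continuousAt hBethe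
end
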